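/- Suppose K is a totally symmetric tensor on the Lie algebra 𝔑 (with respect to the orthonormal basis {e_α}, K^γ_{αβ} is symmetric under all permutations of α,β,γ) satisfying the total symmetry of ∇̂K, i.e. (∇̂_{e_α}K)(e_β,e_γ) = (∇̂_{e_β}K)(e_α,e_γ) for all indices, where ∇̂ is the Levi-Civita connection of the Fisher metric. Then K_{(j,k)(l,m)}^{i} = 0 for all mean indices i and covariance indices (j,k),(l,m). -/

import Mathlib

/-!
Write `κ(X, Y, Z) = g(K(X, Y), Z)` and `dil = diag(½ Iₙ, 0) ∈ 𝔑`. The Levi-Civita connection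
satisfies `∇̂_{e_i} dil = -½ e_i` and `∇̂_{dil} e_i = ∇̂_{dil} dil = ∇̂_{e_{jk}} dil = 0`, and it
respects the splitting of `𝔑` into the mean part `𝔪` and the covariance part `𝔰`:
`∇̂_{e_i} e_{jk}` and `∇̂_{e_{jk}} e_i` lie in `𝔪`, and `∇̂_{e_{jk}} e_{lm}` lies in `𝔰`.
Hence in the Codazzi identity `(∇̂_{e_i} κ)(Y, Z, dil) = (∇̂_Y κ)(e_i, Z, dil)` each `dil` slot
differentiated along `e_i` turns into `-½ e_i`, while the remaining terms are killed by the
previous steps. Taking `(Y, Z) = (dil, dil)`, `(e_{jk}, dil)` and `(e_{jk}, e_{lm})` in turn gives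
`κ(e_i, dil, dil) = 0`, then `κ(e_{jk}, e_i, dil) = 0`, and finally `κ(e_{jk}, e_{lm}, e_i) = 0`.
-/

open Matrix

noncomputable section

/-- The ambient space of (n+1)×(n+1) real matrices containing the Lie algebra 𝔑 of
Aff^s(n,ℝ). -/
abbrev Mat (n : ℕ) := Matrix (Fin (n + 1)) (Fin (n + 1)) ℝ

/-- The mean-direction basis vector e_i: 1 in entry (i, n+1), 0 otherwise. -/
def eMean {n : ℕ} (i : Fin n) : Mat n :=
  Matrix.single i.castSucc (Fin.last n) 1

/-- The covariance-direction basis vector e_{ij} (i<j): 1 in entry (i,j);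
e_{ii}: 1/√2 in entry (i,i). -/
def eCov {n : ℕ} (i j : Fin n) : Mat n :=
  Matrix.single i.castSucc j.castSucc
    (if i = j then (Real.sqrt 2)⁻¹ else 1)

/-- The upper-left n×n block of an element of 𝔑. -/
def blk {n : ℕ} (X : Mat n) : Matrix (Fin n) (Fin n) ℝ :=
  Matrix.of fun i j => X i.castSucc j.castSucc

/-- The last column (mean part) of an element of 𝔑. -/
def mcol {n : ℕ} (X : Mat n) : Fin n → ℝ :=
  fun i => X i.castSucc (Fin.last n)

/-- The Fisher inner product on 𝔑: g((U,u),(V,v)) = tr(UV) + tr(UVᵀ) + uᵀv. -/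
def gN {n : ℕ} (X Y : Mat n) : ℝ :=
  Matrix.trace (blk X * blk Y) + Matrix.trace (blk X * (blk Y)ᵀ) + mcol X ⬝ᵥ mcol Y

end

/-- The symmetric bilinear map U : 𝔑 × 𝔑 → 𝔑 determined by
2g(U(X,Y),Z) = g([Z,X],Y) + g(X,[Z,Y]) for all Z, written out in the orthonormal
basis {e_i} ∪ {e_{ij} : i ≤ j}. -/
noncomputable def Umap {n : ℕ} (X Y : Mat n) : Mat n :=
  (∑ i : Fin n, ((gN ⁅eMean i, X⁆ Y + gN X ⁅eMean i, Y⁆) / 2) • eMean i)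
  + ∑ i : Fin n, ∑ j : Fin n,
      (if i ≤ j then ((gN ⁅eCov i j, X⁆ Y + gN X ⁅eCov i j, Y⁆) / 2) • eCov i j
       else 0)

/-- The left-invariant Levi-Civita connection of the Fisher metric:
∇̂_X Y = (1/2)[X,Y] + U(X,Y). -/
noncomputable def nabla {n : ℕ} (X Y : Mat n) : Mat n :=
  (1 / 2 : ℝ) • ⁅X, Y⁆ + Umap X Y

/-- The index set I = {i} ∪ {(i,j) : i ≤ j} of the orthonormal basis of 𝔑. -/
def Idx (n : ℕ) := Fin n ⊕ {p : Fin n × Fin n // p.1 ≤ p.2}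

/-- The orthonormal basis of 𝔑 indexed by I. -/
noncomputable def EB {n : ℕ} : Idx n → Mat n :=
  Sum.elim (fun i => eMean i) (fun p => eCov p.val.1 p.val.2)


attribute [local instance] LieRing.ofAssociativeRing

section SpanExtension

variable {R M N P : Type*} [CommSemiring R] [AddCommMonoid M] [Module R M] [AddCommMonoid N]
  [Module R N] [AddCommMonoid P] [Module R P]

theorem LinearMap.eq_zero_of_mem_span₂ (f : M →ₗ[R] N →ₗ[R] P) {s : Set M} {t : Set N}
    (h : ∀ x ∈ s, ∀ y ∈ t, f x y = 0) {x : M} {y : N} (hx : x ∈ Submodule.span R s)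
    (hy : y ∈ Submodule.span R t) : f x y = 0 :=
  LinearMap.eqOn_span (f := f.flip y) (g := 0)
    (fun x' hx' => LinearMap.eqOn_span (f := f x') (g := 0) (h x' hx') hy) hx

theorem LinearMap.eqOn_span₃ (f g : M →ₗ[R] M →ₗ[R] M →ₗ[R] P) {s : Set M}
    (h : ∀ x ∈ s, ∀ y ∈ s, ∀ z ∈ s, f x y z = g x y z) {x y z : M}
    (hx : x ∈ Submodule.span R s) (hy : y ∈ Submodule.span R s)
    (hz : z ∈ Submodule.span R s) : f x y z = g x y z := by
  have hxy : ∀ x ∈ s, ∀ y ∈ s, f x y z = g x y z := fun x hx y hy =>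
    LinearMap.eqOn_span (f := f x y) (g := g x y) (h x hx y hy) hz
  have hx' : ∀ x ∈ s, f x y z = g x y z := fun x hx =>
    LinearMap.eqOn_span (f := (f x).flip z) (g := (g x).flip z) (hxy x hx) hy
  exact LinearMap.eqOn_span (f := (f.flip y).flip z) (g := (g.flip y).flip z) hx' hx

end SpanExtension

section FisherMetric

variable {n : ℕ}

@[simp] lemma blk_add (X Y : Mat n) : blk (X + Y) = blk X + blk Y := rfl
@[simp] lemma blk_sub (X Y : Mat n) : blk (X - Y) = blk X - blk Y := rfl
@[simp] lemma blk_smul (r : ℝ) (X : Mat n) : blk (r • X) = r • blk X := rfl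
@[simp] lemma blk_neg (X : Mat n) : blk (-X) = -blk X := rfl
@[simp] lemma mcol_add (X Y : Mat n) : mcol (X + Y) = mcol X + mcol Y := rfl
@[simp] lemma mcol_sub (X Y : Mat n) : mcol (X - Y) = mcol X - mcol Y := rfl
@[simp] lemma mcol_smul (r : ℝ) (X : Mat n) : mcol (r • X) = r • mcol X := rfl
@[simp] lemma mcol_neg (X : Mat n) : mcol (-X) = -mcol X := rfl

@[simp] lemma blk_sum {ι : Type*} (s : Finset ι) (f : ι → Mat n) :
    blk (∑ i ∈ s, f i) = ∑ i ∈ s, blk (f i) := by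
  ext
  simp [blk, Matrix.sum_apply]

@[simp] lemma mcol_sum {ι : Type*} (s : Finset ι) (f : ι → Mat n) :
    mcol (∑ i ∈ s, f i) = ∑ i ∈ s, mcol (f i) := by
  ext
  simp [mcol, Matrix.sum_apply]

lemma gN_comm (X Y : Mat n) : gN X Y = gN Y X := by
  have h : trace (blk X * (blk Y)ᵀ) = trace (blk Y * (blk X)ᵀ) := by
    rw [← trace_transpose, transpose_mul, transpose_transpose, trace_mul_comm]
  rw [gN, gN, trace_mul_comm (blk X), h, dotProduct_comm]

@[simp] lemma gN_add_left (X X' Y : Mat n) : gN (X + X') Y = gN X Y + gN X' Y := by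
  simp only [gN, blk_add, mcol_add, Matrix.add_mul, trace_add, add_dotProduct]
  ring

@[simp] lemma gN_smul_left (r : ℝ) (X Y : Mat n) : gN (r • X) Y = r * gN X Y := by
  simp only [gN, blk_smul, mcol_smul, Matrix.smul_mul, trace_smul, smul_dotProduct, smul_eq_mul]
  ring

def fisher (n : ℕ) : Mat n →ₗ[ℝ] Mat n →ₗ[ℝ] ℝ :=
  LinearMap.mk₂ ℝ gN gN_add_left gN_smul_left
    (fun X Y Y' => by rw [gN_comm, gN_add_left, gN_comm Y, gN_comm Y'])
    (fun r X Y => by rw [gN_comm, gN_smul_left, gN_comm Y, smul_eq_mul])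

@[simp] lemma fisher_apply (X Y : Mat n) : fisher n X Y = gN X Y := rfl

@[simp] lemma gN_add_right (X Y Y' : Mat n) : gN X (Y + Y') = gN X Y + gN X Y' :=
  (fisher n X).map_add Y Y'

@[simp] lemma gN_smul_right (r : ℝ) (X Y : Mat n) : gN X (r • Y) = r * gN X Y :=
  (fisher n X).map_smul r Y

@[simp] lemma gN_zero_left (Y : Mat n) : gN 0 Y = 0 := (fisher n).map_zero₂ Y

@[simp] lemma gN_zero_right (X : Mat n) : gN X 0 = 0 := (fisher n X).map_zero

@[simp] lemma gN_neg_left (X Y : Mat n) : gN (-X) Y = -gN X Y := (fisher n).map_neg₂ X Y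

@[simp] lemma gN_neg_right (X Y : Mat n) : gN X (-Y) = -gN X Y := (fisher n X).map_neg Y

@[simp] lemma gN_sub_left (X X' Y : Mat n) : gN (X - X') Y = gN X Y - gN X' Y :=
  (fisher n).map_sub₂ X X' Y

lemma gN_sum_left {ι : Type*} (s : Finset ι) (f : ι → Mat n) (Y : Mat n) :
    gN (∑ i ∈ s, f i) Y = ∑ i ∈ s, gN (f i) Y :=
  (fisher n).map_sum₂ s f Y

end FisherMetric

section Blocks

variable {n : ℕ} {X Y : Mat n}

lemma blk_mul (hY : Y (Fin.last n) = 0) : blk (X * Y) = blk X * blk Y := by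
  ext i j
  simp [blk, mul_apply, Fin.sum_univ_castSucc, hY]

lemma mcol_mul (hY : Y (Fin.last n) = 0) : mcol (X * Y) = blk X *ᵥ mcol Y := by
  ext i
  simp [mcol, blk, mul_apply, mulVec, dotProduct, Fin.sum_univ_castSucc, hY]

lemma lie_last (hX : X (Fin.last n) = 0) (hY : Y (Fin.last n) = 0) :
    ⁅X, Y⁆ (Fin.last n) = 0 := by
  ext c
  simp [Ring.lie_def, mul_apply, hX, hY]

lemma blk_lie (hX : X (Fin.last n) = 0) (hY : Y (Fin.last n) = 0) :
    blk ⁅X, Y⁆ = ⁅blk X, blk Y⁆ := by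
  rw [Ring.lie_def, Ring.lie_def, blk_sub, blk_mul hY, blk_mul hX]

lemma mcol_lie (hX : X (Fin.last n) = 0) (hY : Y (Fin.last n) = 0) :
    mcol ⁅X, Y⁆ = blk X *ᵥ mcol Y - blk Y *ᵥ mcol X := by
  rw [Ring.lie_def, mcol_sub, mcol_mul hY, mcol_mul hX]

lemma ext_blk_mcol (hX : X (Fin.last n) = 0) (hY : Y (Fin.last n) = 0)
    (hblk : blk X = blk Y) (hmcol : mcol X = mcol Y) : X = Y := by
  ext r c
  induction r using Fin.lastCases with
  | last => rw [hX, hY]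
  | cast i =>
    induction c using Fin.lastCases with
    | last => exact congrFun hmcol i
    | cast j => exact congrFun (congrFun hblk i) j

lemma gN_of_blk_eq_zero (hX : blk X = 0) : gN X Y = mcol X ⬝ᵥ mcol Y := by
  simp [gN, hX]

lemma gN_of_mcol_eq_zero (hX : mcol X = 0) (hY : blk Y = 0) : gN X Y = 0 := by
  rw [gN_comm, gN_of_blk_eq_zero hY, hX, dotProduct_zero]

end Blocks

section Basis

variable {n : ℕ}

@[simp] lemma blk_eMean (i : Fin n) : blk (eMean i) = 0 := by
  ext p q
  simp [blk, eMean, single_apply, (Fin.castSucc_ne_last q).symm]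

@[simp] lemma mcol_eMean (i : Fin n) : mcol (eMean i) = Pi.single i 1 := by
  ext p
  simp [mcol, eMean, single_apply, Pi.single_apply, eq_comm]

@[simp] lemma eMean_last (i : Fin n) : eMean i (Fin.last n) = 0 := by
  ext c
  simp [eMean, (Fin.castSucc_lt_last i).ne]

@[simp] lemma blk_eCov (j k : Fin n) :
    blk (eCov j k) = single j k (if j = k then (Real.sqrt 2)⁻¹ else 1) := by
  ext p q
  simp [blk, eCov, single_apply]

@[simp] lemma mcol_eCov (j k : Fin n) : mcol (eCov j k) = 0 := by
  ext p
  simp [mcol, eCov, (Fin.castSucc_lt_last k).ne]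

@[simp] lemma eCov_last (j k : Fin n) : eCov j k (Fin.last n) = 0 := by
  ext c
  simp [eCov, (Fin.castSucc_lt_last j).ne]

lemma EB_last (a : Idx n) : EB a (Fin.last n) = 0 := by
  cases a <;> simp [EB]

lemma gN_eMean_eMean (s t : Fin n) : gN (eMean s) (eMean t) = if s = t then 1 else 0 := by
  simp [gN_of_blk_eq_zero, Pi.single_apply, eq_comm]

lemma gN_eMean_eCov (t j k : Fin n) : gN (eMean t) (eCov j k) = 0 := by
  simp [gN_of_blk_eq_zero]

lemma gN_eCov_eMean (j k t : Fin n) : gN (eCov j k) (eMean t) = 0 := by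
  rw [gN_comm, gN_eMean_eCov]

lemma gN_eCov_eCov {j k l m : Fin n} (hjk : j ≤ k) (hlm : l ≤ m) :
    gN (eCov j k) (eCov l m) = if j = l ∧ k = m then 1 else 0 := by
  simp only [gN, blk_eCov, mcol_eCov, dotProduct_zero, add_zero, transpose_single,
    trace_single_mul, smul_eq_mul, single_apply]
  by_cases h : j = l ∧ k = m
  · obtain ⟨rfl, rfl⟩ := h
    by_cases hjk' : j = k <;> norm_num [hjk', TsirelsonInequality.sqrt_two_inv_mul_self]
  · have h₁ : ¬(l = k ∧ m = j) := by
      rintro ⟨rfl, rfl⟩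
      exact h ⟨le_antisymm hjk hlm, le_antisymm hlm hjk⟩
    have h₂ : ¬(m = k ∧ l = j) := fun h' => h ⟨h'.2.symm, h'.1.symm⟩
    simp [h, h₁, h₂]

end Basis

section Subspaces

variable {n : ℕ}

abbrev 𝔑 (n : ℕ) : Submodule ℝ (Mat n) := Submodule.span ℝ (Set.range EB)

abbrev 𝔪 (n : ℕ) : Submodule ℝ (Mat n) := Submodule.span ℝ (Set.range eMean)

abbrev 𝔰 (n : ℕ) : Submodule ℝ (Mat n) := Submodule.span ℝ {X | ∃ j k, j ≤ k ∧ eCov j k = X}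

lemma EB_mem (a : Idx n) : EB a ∈ 𝔑 n := Submodule.subset_span ⟨a, rfl⟩

lemma eMean_mem (i : Fin n) : eMean i ∈ 𝔑 n := EB_mem (.inl i)

lemma eCov_mem {j k : Fin n} (h : j ≤ k) : eCov j k ∈ 𝔑 n := EB_mem (.inr ⟨(j, k), h⟩)

lemma eMean_mem_𝔪 (i : Fin n) : eMean i ∈ 𝔪 n := Submodule.subset_span ⟨i, rfl⟩

lemma eCov_mem_𝔰 {j k : Fin n} (h : j ≤ k) : eCov j k ∈ 𝔰 n :=
  Submodule.subset_span ⟨j, k, h, rfl⟩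

lemma 𝔪_le : 𝔪 n ≤ 𝔑 n := Submodule.span_le.mpr <| Set.range_subset_iff.mpr eMean_mem

lemma 𝔰_le : 𝔰 n ≤ 𝔑 n := Submodule.span_le.mpr <| by
  rintro _ ⟨j, k, h, rfl⟩
  exact eCov_mem h

lemma last_eq_zero_of_mem {X : Mat n} (hX : X ∈ 𝔑 n) : X (Fin.last n) = 0 := by
  induction hX using Submodule.span_induction with
  | mem _ h => obtain ⟨a, rfl⟩ := h; exact EB_last a
  | zero => rfl
  | add _ _ _ _ h₁ h₂ => ext c; simp [h₁, h₂]
  | smul r _ _ h => ext c; simp [h]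

lemma mem_𝔪_of_blk_eq_zero {X : Mat n} (hX : X (Fin.last n) = 0) (h : blk X = 0) :
    X ∈ 𝔪 n := by
  have hsum : ∑ t, mcol X t • eMean t ∈ 𝔪 n :=
    Submodule.sum_mem _ fun t _ => Submodule.smul_mem _ _ (eMean_mem_𝔪 t)
  convert hsum
  refine ext_blk_mcol hX (last_eq_zero_of_mem (𝔪_le hsum)) ?_ ?_
  · simp [h]
  · ext i
    simp [Finset.sum_apply, Pi.single_apply]

lemma single_castSucc_mem_𝔰 {j m : Fin n} (h : j ≤ m) (x : ℝ) :
    single j.castSucc m.castSucc x ∈ 𝔰 n := by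
  set c : ℝ := if j = m then (Real.sqrt 2)⁻¹ else 1
  have hc : c ≠ 0 := by positivity
  convert Submodule.smul_mem _ (x * c⁻¹) (eCov_mem_𝔰 h) using 1
  rw [eCov, smul_single, smul_eq_mul, inv_mul_cancel_right₀ hc]

end Subspaces

section Expansion

variable {n : ℕ}

instance : Fintype (Idx n) :=
  inferInstanceAs (Fintype (Fin n ⊕ {p : Fin n × Fin n // p.1 ≤ p.2}))

instance : DecidableEq (Idx n) :=
  inferInstanceAs (DecidableEq (Fin n ⊕ {p : Fin n × Fin n // p.1 ≤ p.2}))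

lemma sum_Idx {M : Type*} [AddCommMonoid M] (f : Idx n → M) :
    ∑ a, f a = ∑ i, f (.inl i) + ∑ p, f (.inr p) :=
  Fintype.sum_sum_type f

lemma gN_EB_EB (a b : Idx n) : gN (EB a) (EB b) = if a = b then 1 else 0 := by
  split_ifs with h
  · subst h
    rcases a with t | ⟨⟨j, k⟩, hjk⟩
    · simp [EB, gN_eMean_eMean]
    · simp [EB, gN_eCov_eCov hjk hjk]
  · rcases a with s | ⟨⟨j, k⟩, hjk⟩ <;> rcases b with t | ⟨⟨l, m⟩, hlm⟩
    · have hst : s ≠ t := by rintro rfl; exact h rfl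
      simp [EB, gN_eMean_eMean, hst]
    · simp [EB, gN_eMean_eCov]
    · simp [EB, gN_eCov_eMean]
    · have hne : ¬(j = l ∧ k = m) := by rintro ⟨rfl, rfl⟩; exact h rfl
      simp [EB, gN_eCov_eCov hjk hlm, hne]

noncomputable def basisSum (c : Mat n → ℝ) : Mat n := ∑ a, c (EB a) • EB a

lemma gN_basisSum (c : Mat n → ℝ) (b : Idx n) : gN (basisSum c) (EB b) = c (EB b) := by
  simp [basisSum, gN_sum_left, gN_EB_EB]

lemma basisSum_gN {X : Mat n} (hX : X ∈ 𝔑 n) : basisSum (gN X) = X := by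
  induction hX using Submodule.span_induction with
  | mem _ h =>
    obtain ⟨b, rfl⟩ := h
    simp [basisSum, gN_EB_EB, eq_comm (a := b)]
  | zero => simp [basisSum]
  | add X Y _ _ hX hY =>
    nth_rw 2 [← hX, ← hY]
    simp [basisSum, add_smul, Finset.sum_add_distrib]
  | smul r X _ hX =>
    nth_rw 2 [← hX]
    simp [basisSum, Finset.smul_sum, mul_smul]

lemma basisSum_mem_𝔪 {c : Mat n → ℝ} (h : ∀ j k, j ≤ k → c (eCov j k) = 0) :
    basisSum c ∈ 𝔪 n := by
  rw [basisSum, sum_Idx]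
  refine add_mem (Submodule.sum_mem _ fun t _ => Submodule.smul_mem _ _ (eMean_mem_𝔪 t)) ?_
  exact Submodule.sum_mem _ fun p _ => by simp [EB, h _ _ p.2]

lemma basisSum_mem_𝔰 {c : Mat n → ℝ} (h : ∀ t, c (eMean t) = 0) : basisSum c ∈ 𝔰 n := by
  rw [basisSum, sum_Idx]
  refine add_mem ?_ (Submodule.sum_mem _ fun p _ => Submodule.smul_mem _ _ (eCov_mem_𝔰 p.2))
  simp [EB, h]

end Expansion

section Connection

variable {n : ℕ}

noncomputable def umapCoeff (X Y Z : Mat n) : ℝ := (gN ⁅Z, X⁆ Y + gN X ⁅Z, Y⁆) / 2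

lemma Umap_eq_basisSum (X Y : Mat n) : Umap X Y = basisSum (umapCoeff X Y) := by
  rw [basisSum, sum_Idx]
  simp only [EB, Sum.elim_inl, Sum.elim_inr]
  rw [← Finset.sum_subtype (Finset.univ.filter fun p : Fin n × Fin n => p.1 ≤ p.2) (by simp)
    (fun p => umapCoeff X Y (eCov p.1 p.2) • eCov p.1 p.2), Finset.sum_filter,
    Fintype.sum_prod_type]
  rfl

lemma Umap_eq_of_gN {X Y V : Mat n} (hV : V ∈ 𝔑 n)
    (h : ∀ a, umapCoeff X Y (EB a) = gN V (EB a)) : Umap X Y = V := by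
  rw [Umap_eq_basisSum, ← basisSum_gN hV]
  exact Finset.sum_congr rfl fun a _ => by rw [h a]

lemma gN_Umap (X Y : Mat n) {Z : Mat n} (hZ : Z ∈ 𝔑 n) :
    gN (Umap X Y) Z = umapCoeff X Y Z := by
  induction hZ using Submodule.span_induction with
  | mem _ h => obtain ⟨a, rfl⟩ := h; rw [Umap_eq_basisSum, gN_basisSum]
  | zero => simp [umapCoeff]
  | add Z Z' _ _ h h' =>
    rw [gN_add_right, h, h']
    simp only [umapCoeff, add_lie, gN_add_left, gN_add_right]
    ring
  | smul r Z _ h =>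
    rw [gN_smul_right, h]
    simp only [umapCoeff, smul_lie, gN_smul_left, gN_smul_right]
    ring

lemma Umap_comm (X Y : Mat n) : Umap X Y = Umap Y X := by
  have h : umapCoeff X Y = umapCoeff Y X := funext fun Z => by
    rw [umapCoeff, umapCoeff, gN_comm ⁅Z, X⁆, gN_comm X, add_comm]
  rw [Umap_eq_basisSum, Umap_eq_basisSum, h]

lemma Umap_add_left (X X' Y : Mat n) : Umap (X + X') Y = Umap X Y + Umap X' Y := by
  simp only [Umap_eq_basisSum, basisSum, ← Finset.sum_add_distrib, ← add_smul]
  congr! 2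
  simp only [umapCoeff, lie_add, gN_add_left]
  ring

lemma Umap_smul_left (r : ℝ) (X Y : Mat n) : Umap (r • X) Y = r • Umap X Y := by
  simp only [Umap_eq_basisSum, basisSum, Finset.smul_sum, smul_smul]
  congr! 2
  simp only [umapCoeff, lie_smul, gN_smul_left]
  ring

lemma nabla_add_left (X X' Y : Mat n) : nabla (X + X') Y = nabla X Y + nabla X' Y := by
  rw [nabla, nabla, nabla, add_lie, Umap_add_left]
  module

lemma nabla_add_right (X Y Y' : Mat n) : nabla X (Y + Y') = nabla X Y + nabla X Y' := by
  rw [nabla, nabla, nabla, lie_add, Umap_comm, Umap_add_left, Umap_comm Y, Umap_comm Y']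
  module

lemma nabla_smul_left (r : ℝ) (X Y : Mat n) : nabla (r • X) Y = r • nabla X Y := by
  rw [nabla, nabla, smul_lie, Umap_smul_left]
  module

lemma nabla_smul_right (r : ℝ) (X Y : Mat n) : nabla X (r • Y) = r • nabla X Y := by
  rw [nabla, nabla, lie_smul, Umap_comm, Umap_smul_left, Umap_comm Y]
  module

lemma nabla_zero_left (Y : Mat n) : nabla 0 Y = 0 := by
  simpa using nabla_smul_left 0 0 Y

lemma nabla_zero_right (X : Mat n) : nabla X 0 = 0 := by
  simpa using nabla_smul_right 0 X 0

lemma gN_nabla_add_gN_nabla (X : Mat n) {Z W : Mat n} (hZ : Z ∈ 𝔑 n) (hW : W ∈ 𝔑 n) :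
    gN (nabla X Z) W + gN Z (nabla X W) = 0 := by
  rw [gN_comm Z, nabla, nabla, gN_add_left, gN_add_left, gN_Umap X Z hW, gN_Umap X W hZ,
    umapCoeff, umapCoeff, ← lie_skew X W, ← lie_skew X Z, ← lie_skew Z W]
  simp only [gN_smul_left, gN_neg_left, gN_neg_right]
  ring

end Connection

section Dilation

variable {n : ℕ} {X : Mat n}

/-- `dil n = diag(½ Iₙ, 0)`; bracketing with it is `-½` on the mean directions and `0` on the
covariance directions. -/
noncomputable def dil (n : ℕ) : Mat n := ∑ k, (Real.sqrt 2)⁻¹ • eCov k k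

lemma dil_mem : dil n ∈ 𝔑 n :=
  Submodule.sum_mem _ fun _ _ => Submodule.smul_mem _ _ (eCov_mem le_rfl)

@[simp] lemma blk_dil : blk (dil n) = (2⁻¹ : ℝ) • 1 := by
  simp [dil, smul_single, TsirelsonInequality.sqrt_two_inv_mul_self, sum_single_eq_diagonal,
    smul_one_eq_diagonal]

@[simp] lemma mcol_dil : mcol (dil n) = 0 := by
  simp [dil]

lemma dil_last : dil n (Fin.last n) = 0 := last_eq_zero_of_mem dil_mem

lemma gN_dil (X : Mat n) : gN X (dil n) = trace (blk X) := by
  simp [gN]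
  ring

lemma gN_lie_dil {Y : Mat n} (hX : X (Fin.last n) = 0) (hY : Y (Fin.last n) = 0) :
    gN ⁅X, Y⁆ (dil n) = 0 := by
  rw [gN_dil, blk_lie hX hY, Ring.lie_def, trace_sub, trace_mul_comm, sub_self]

lemma blk_lie_dil (hX : X (Fin.last n) = 0) : blk ⁅X, dil n⁆ = 0 := by
  rw [blk_lie hX dil_last, blk_dil, lie_smul, Ring.lie_def, mul_one, one_mul, sub_self,
    smul_zero]

lemma mcol_lie_dil (hX : X (Fin.last n) = 0) : mcol ⁅X, dil n⁆ = -(2⁻¹ : ℝ) • mcol X := by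
  rw [mcol_lie hX dil_last, blk_dil, mcol_dil, mulVec_zero, smul_mulVec, one_mulVec,
    zero_sub, neg_smul]

lemma lie_eMean_dil (t : Fin n) : ⁅eMean t, dil n⁆ = -(2⁻¹ : ℝ) • eMean t := by
  refine ext_blk_mcol (lie_last (eMean_last t) dil_last) ?_ ?_ ?_
  · ext c
    simp
  · simp [blk_lie_dil]
  · simp [mcol_lie_dil]

lemma lie_dil_of_mcol_eq_zero (hX : X (Fin.last n) = 0) (h : mcol X = 0) :
    ⁅X, dil n⁆ = 0 :=
  ext_blk_mcol (lie_last hX dil_last) rfl (blk_lie_dil hX)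
    (by rw [mcol_lie_dil hX, h, smul_zero]; rfl)

lemma umapCoeff_dil {Z : Mat n} (hX : X (Fin.last n) = 0) (hZ : Z (Fin.last n) = 0) :
    umapCoeff X (dil n) Z = -4⁻¹ * (mcol X ⬝ᵥ mcol Z) := by
  rw [umapCoeff, gN_lie_dil hZ hX]
  simp [gN, blk_lie_dil hZ, mcol_lie_dil hZ]
  ring

lemma Umap_dil_of_mcol_eq_zero (hX : X (Fin.last n) = 0) (h : mcol X = 0) :
    Umap X (dil n) = 0 :=
  Umap_eq_of_gN (zero_mem _) fun a => by simp [umapCoeff_dil hX (EB_last a), h]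

lemma Umap_eMean_dil (t : Fin n) : Umap (eMean t) (dil n) = -(4⁻¹ : ℝ) • eMean t :=
  Umap_eq_of_gN (Submodule.smul_mem _ _ (eMean_mem t)) fun a => by
    rw [umapCoeff_dil (eMean_last t) (EB_last a), gN_smul_left, gN_of_blk_eq_zero (blk_eMean t)]

lemma nabla_eMean_dil (t : Fin n) : nabla (eMean t) (dil n) = -(2⁻¹ : ℝ) • eMean t := by
  rw [nabla, lie_eMean_dil, Umap_eMean_dil]
  module

lemma nabla_dil_eMean (t : Fin n) : nabla (dil n) (eMean t) = 0 := by
  rw [nabla, ← lie_skew, lie_eMean_dil, Umap_comm, Umap_eMean_dil]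
  module

lemma nabla_dil_of_mcol_eq_zero (hX : X (Fin.last n) = 0) (h : mcol X = 0) :
    nabla X (dil n) = 0 := by
  rw [nabla, lie_dil_of_mcol_eq_zero hX h, Umap_dil_of_mcol_eq_zero hX h, smul_zero, add_zero]

end Dilation

section Grading

variable {n : ℕ}

lemma lie_eMean_eCov_mem (t p q : Fin n) : ⁅eMean t, eCov p q⁆ ∈ 𝔪 n :=
  mem_𝔪_of_blk_eq_zero (lie_last (eMean_last t) (eCov_last p q))
    (by rw [blk_lie (eMean_last t) (eCov_last p q), blk_eMean, zero_lie])

lemma lie_eCov_eCov_mem {j k l m : Fin n} (hjk : j ≤ k) (hlm : l ≤ m) :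
    ⁅eCov j k, eCov l m⁆ ∈ 𝔰 n := by
  have hmul : ∀ {a b c d : Fin n}, a ≤ b → c ≤ d → eCov a b * eCov c d ∈ 𝔰 n := by
    intro a b c d hab hcd
    rcases eq_or_ne b c with rfl | hbc
    · rw [eCov, eCov, single_mul_single_same]
      exact single_castSucc_mem_𝔰 (hab.trans hcd) _
    · rw [eCov, eCov, single_mul_single_of_ne (h := (Fin.castSucc_injective n).ne hbc)]
      exact zero_mem _
  rw [Ring.lie_def]
  exact sub_mem (hmul hjk hlm) (hmul hlm hjk)

lemma Umap_eMean_eCov_mem (t p q : Fin n) : Umap (eMean t) (eCov p q) ∈ 𝔪 n := by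
  rw [Umap_eq_basisSum]
  refine basisSum_mem_𝔪 fun j k _ => ?_
  simp [umapCoeff, gN_of_blk_eq_zero, blk_lie, mcol_lie]

lemma Umap_eCov_eCov_mem (j k l m : Fin n) : Umap (eCov j k) (eCov l m) ∈ 𝔰 n := by
  rw [Umap_eq_basisSum]
  refine basisSum_mem_𝔰 fun t => ?_
  simp [umapCoeff, gN_of_blk_eq_zero, gN_of_mcol_eq_zero, blk_lie, mcol_lie]

lemma nabla_eMean_eCov_mem (t p q : Fin n) : nabla (eMean t) (eCov p q) ∈ 𝔪 n :=
  add_mem (Submodule.smul_mem _ _ (lie_eMean_eCov_mem t p q)) (Umap_eMean_eCov_mem t p q)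

lemma nabla_eCov_eMean_mem (p q t : Fin n) : nabla (eCov p q) (eMean t) ∈ 𝔪 n := by
  rw [nabla, ← lie_skew, Umap_comm]
  exact add_mem (Submodule.smul_mem _ _ (neg_mem (lie_eMean_eCov_mem t p q)))
    (Umap_eMean_eCov_mem t p q)

lemma nabla_eCov_eCov_mem {j k l m : Fin n} (hjk : j ≤ k) (hlm : l ≤ m) :
    nabla (eCov j k) (eCov l m) ∈ 𝔰 n :=
  add_mem (Submodule.smul_mem _ _ (lie_eCov_eCov_mem hjk hlm)) (Umap_eCov_eCov_mem j k l m)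

end Grading

section Codazzi

variable {n : ℕ}

/-- For left-invariant `κ, X, Y, Z, W` the function `κ(Y, Z, W)` is constant, so
`(∇̂_X κ)(Y, Z, W)` consists of the Leibniz terms alone. -/
noncomputable def covDeriv (κ : Mat n →ₗ[ℝ] Mat n →ₗ[ℝ] Mat n →ₗ[ℝ] ℝ) (X Y Z W : Mat n) : ℝ :=
  -(κ (nabla X Y) Z W + κ Y (nabla X Z) W + κ Y Z (nabla X W))

structure IsCodazzi (κ : Mat n →ₗ[ℝ] Mat n →ₗ[ℝ] Mat n →ₗ[ℝ] ℝ) : Prop where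
  comm₁₂ : ∀ x ∈ 𝔑 n, ∀ y ∈ 𝔑 n, ∀ z ∈ 𝔑 n, κ x y z = κ y x z
  comm₂₃ : ∀ x ∈ 𝔑 n, ∀ y ∈ 𝔑 n, ∀ z ∈ 𝔑 n, κ x y z = κ x z y
  covDeriv_comm : ∀ a b c d : Idx n,
    covDeriv κ (EB a) (EB b) (EB c) (EB d) = covDeriv κ (EB b) (EB a) (EB c) (EB d)

namespace IsCodazzi

variable {κ : Mat n →ₗ[ℝ] Mat n →ₗ[ℝ] Mat n →ₗ[ℝ] ℝ}

lemma covDeriv_comm_of_mem (hκ : IsCodazzi κ) (a : Idx n) {Y Z W : Mat n} (hY : Y ∈ 𝔑 n)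
    (hZ : Z ∈ 𝔑 n) (hW : W ∈ 𝔑 n) : covDeriv κ (EB a) Y Z W = covDeriv κ Y (EB a) Z W := by
  have hW' : ∀ b c, covDeriv κ (EB a) (EB b) (EB c) W = covDeriv κ (EB b) (EB a) (EB c) W := by
    intro b c
    induction hW using Submodule.span_induction with
    | mem _ h => obtain ⟨d, rfl⟩ := h; exact hκ.covDeriv_comm a b c d
    | zero => simp [covDeriv, nabla_zero_right]
    | add W W' _ _ h h' =>
      simp only [covDeriv, nabla_add_right, map_add] at h h' ⊢
      linarith
    | smul r W _ h =>
      simp only [covDeriv, nabla_smul_right, map_smul, smul_eq_mul] at h ⊢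
      linear_combination r * h
  have hZ' : ∀ b, covDeriv κ (EB a) (EB b) Z W = covDeriv κ (EB b) (EB a) Z W := by
    intro b
    induction hZ using Submodule.span_induction with
    | mem _ h => obtain ⟨c, rfl⟩ := h; exact hW' b c
    | zero => simp [covDeriv, nabla_zero_right]
    | add Z Z' _ _ h h' =>
      simp only [covDeriv, nabla_add_right, map_add, LinearMap.add_apply] at h h' ⊢
      linarith
    | smul r Z _ h =>
      simp only [covDeriv, nabla_smul_right, map_smul, LinearMap.smul_apply, smul_eq_mul] at h ⊢
      linear_combination r * h
  induction hY using Submodule.span_induction with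
  | mem _ h => obtain ⟨b, rfl⟩ := h; exact hZ' b
  | zero => simp [covDeriv, nabla_zero_left, nabla_zero_right]
  | add Y Y' _ _ h h' =>
    simp only [covDeriv, nabla_add_left, nabla_add_right, map_add, LinearMap.add_apply] at h h' ⊢
    linarith
  | smul r Y _ h =>
    simp only [covDeriv, nabla_smul_left, nabla_smul_right, map_smul, LinearMap.smul_apply,
      smul_eq_mul] at h ⊢
    linear_combination r * h

lemma apply_dil_dil_of_mem_𝔪 (hκ : IsCodazzi κ) {x : Mat n} (hx : x ∈ 𝔪 n) :
    κ x (dil n) (dil n) = 0 := by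
  refine LinearMap.eqOn_span (f := (κ.flip (dil n)).flip (dil n)) (g := 0) ?_ hx
  rintro _ ⟨t, rfl⟩
  have h := hκ.covDeriv_comm_of_mem (.inl t) dil_mem dil_mem dil_mem
  simp only [covDeriv, EB, Sum.elim_inl, nabla_eMean_dil, nabla_dil_eMean,
    nabla_dil_of_mcol_eq_zero dil_last mcol_dil, map_smul, map_zero, LinearMap.smul_apply,
    LinearMap.zero_apply, smul_eq_mul] at h
  have h₁ := hκ.comm₁₂ _ (eMean_mem t) _ dil_mem _ dil_mem
  have h₂ := hκ.comm₂₃ _ dil_mem _ (eMean_mem t) _ dil_mem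
  simp only [LinearMap.flip_apply, LinearMap.zero_apply]
  linarith

lemma apply_dil_of_mem_𝔰_of_mem_𝔪 (hκ : IsCodazzi κ) {x y : Mat n} (hx : x ∈ 𝔰 n)
    (hy : y ∈ 𝔪 n) : κ x y (dil n) = 0 := by
  refine LinearMap.eq_zero_of_mem_span₂ (κ.compr₂ (LinearMap.applyₗ (dil n))) ?_ hx hy
  rintro _ ⟨p, q, hpq, rfl⟩ _ ⟨t, rfl⟩
  have h := hκ.covDeriv_comm_of_mem (.inl t) (eCov_mem hpq) dil_mem dil_mem
  simp only [covDeriv, EB, Sum.elim_inl, nabla_eMean_dil,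
    nabla_dil_of_mcol_eq_zero (eCov_last p q) (mcol_eCov p q), map_smul, map_zero,
    LinearMap.smul_apply, LinearMap.zero_apply, smul_eq_mul] at h
  have h₁ := hκ.apply_dil_dil_of_mem_𝔪 (nabla_eMean_eCov_mem t p q)
  have h₂ := hκ.apply_dil_dil_of_mem_𝔪 (nabla_eCov_eMean_mem p q t)
  have h₃ := hκ.comm₂₃ _ (eCov_mem hpq) _ (eMean_mem t) _ dil_mem
  simp only [LinearMap.compr₂_apply, LinearMap.applyₗ_apply_apply]
  linarith

lemma apply_eCov_eCov_eMean (hκ : IsCodazzi κ) (i : Fin n) {j k l m : Fin n} (hjk : j ≤ k)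
    (hlm : l ≤ m) : κ (eCov j k) (eCov l m) (eMean i) = 0 := by
  have h := hκ.covDeriv_comm_of_mem (.inl i) (eCov_mem hjk) (eCov_mem hlm) dil_mem
  simp only [covDeriv, EB, Sum.elim_inl, nabla_eMean_dil,
    nabla_dil_of_mcol_eq_zero (eCov_last j k) (mcol_eCov j k), map_smul, map_zero,
    smul_eq_mul] at h
  have hm₁ := nabla_eMean_eCov_mem i j k
  have hm₂ := nabla_eMean_eCov_mem i l m
  have hm₃ := nabla_eCov_eMean_mem j k i
  have hs := nabla_eCov_eCov_mem hjk hlm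
  have h₁ := hκ.comm₁₂ _ (𝔪_le hm₁) _ (eCov_mem hlm) _ dil_mem
  have h₂ := hκ.comm₁₂ _ (𝔪_le hm₃) _ (eCov_mem hlm) _ dil_mem
  have h₃ := hκ.comm₁₂ _ (eMean_mem i) _ (𝔰_le hs) _ dil_mem
  have h₄ := hκ.comm₂₃ _ (eCov_mem hjk) _ (eCov_mem hlm) _ (eMean_mem i)
  linarith [hκ.apply_dil_of_mem_𝔰_of_mem_𝔪 (eCov_mem_𝔰 hlm) hm₁,
    hκ.apply_dil_of_mem_𝔰_of_mem_𝔪 (eCov_mem_𝔰 hjk) hm₂,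
    hκ.apply_dil_of_mem_𝔰_of_mem_𝔪 (eCov_mem_𝔰 hlm) hm₃,
    hκ.apply_dil_of_mem_𝔰_of_mem_𝔪 hs (eMean_mem_𝔪 i)]

end IsCodazzi

end Codazzi

section FisherCubicForm

variable {n : ℕ}

lemma covDeriv_compr₂_fisher (K : Mat n →ₗ[ℝ] Mat n →ₗ[ℝ] Mat n) (X : Mat n) {Y Z W : Mat n}
    (hKYZ : K Y Z ∈ 𝔑 n) (hW : W ∈ 𝔑 n) :
    covDeriv (K.compr₂ (fisher n)) X Y Z W
      = gN (nabla X (K Y Z) - K (nabla X Y) Z - K Y (nabla X Z)) W := by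
  have h := gN_nabla_add_gN_nabla X hKYZ hW
  simp only [covDeriv, LinearMap.compr₂_apply, fisher_apply, gN_sub_left]
  linarith

lemma isCodazzi_compr₂_fisher (K : Mat n →ₗ[ℝ] Mat n →ₗ[ℝ] Mat n)
    (hval : ∀ a b : Idx n, K (EB a) (EB b) ∈ 𝔑 n)
    (hsymm1 : ∀ a b c : Idx n, gN (K (EB a) (EB b)) (EB c) = gN (K (EB b) (EB a)) (EB c))
    (hsymm2 : ∀ a b c : Idx n, gN (K (EB a) (EB b)) (EB c) = gN (K (EB a) (EB c)) (EB b))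
    (hnabK : ∀ a b c : Idx n,
      nabla (EB a) (K (EB b) (EB c)) - K (nabla (EB a) (EB b)) (EB c)
          - K (EB b) (nabla (EB a) (EB c))
        = nabla (EB b) (K (EB a) (EB c)) - K (nabla (EB b) (EB a)) (EB c)
          - K (EB a) (nabla (EB b) (EB c))) :
    IsCodazzi (K.compr₂ (fisher n)) where
  comm₁₂ _ hx _ hy _ hz := LinearMap.eqOn_span₃ _ (K.compr₂ (fisher n)).flip
    (by rintro _ ⟨a, rfl⟩ _ ⟨b, rfl⟩ _ ⟨c, rfl⟩; exact hsymm1 a b c) hx hy hz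
  comm₂₃ _ hx _ hy _ hz := LinearMap.eqOn_span₃ _
    ((LinearMap.lflip (R₀ := ℝ)).toLinearMap ∘ₗ K.compr₂ (fisher n))
    (by rintro _ ⟨a, rfl⟩ _ ⟨b, rfl⟩ _ ⟨c, rfl⟩; exact hsymm2 a b c) hx hy hz
  covDeriv_comm a b c d := by
    rw [covDeriv_compr₂_fisher K _ (hval b c) (EB_mem d),
      covDeriv_compr₂_fisher K _ (hval a c) (EB_mem d), hnabK]

end FisherCubicForm

/-- let K be a totally symmetric tensor on the Lie algebra 𝔑 (its
components K^γ_{αβ} = g(K(e_α,e_β),e_γ) with respect to the orthonormal basis are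
symmetric under all permutations of α,β,γ and K takes values in 𝔑) such that ∇̂K is
totally symmetric, i.e. (∇̂_{e_α}K)(e_β,e_γ) = (∇̂_{e_β}K)(e_α,e_γ) for all indices,
where ∇̂ is the Levi-Civita connection of the Fisher metric. Then
K^i_{(j,k)(l,m)} = 0 for every mean index i and covariance indices (j,k), (l,m). -/
theorem K_mean_cov_cov_vanishes (n : ℕ)
    (K : Mat n →ₗ[ℝ] Mat n →ₗ[ℝ] Mat n)
    (hval : ∀ a b : Idx n, K (EB a) (EB b) ∈ Submodule.span ℝ (Set.range (EB (n := n))))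
    (hsymm1 : ∀ a b c : Idx n,
      gN (K (EB a) (EB b)) (EB c) = gN (K (EB b) (EB a)) (EB c))
    (hsymm2 : ∀ a b c : Idx n,
      gN (K (EB a) (EB b)) (EB c) = gN (K (EB a) (EB c)) (EB b))
    (hnabK : ∀ a b c : Idx n,
      nabla (EB a) (K (EB b) (EB c)) - K (nabla (EB a) (EB b)) (EB c)
          - K (EB b) (nabla (EB a) (EB c))
        = nabla (EB b) (K (EB a) (EB c)) - K (nabla (EB b) (EB a)) (EB c)
          - K (EB a) (nabla (EB b) (EB c))) :
    ∀ i j k l m : Fin n, j ≤ k → l ≤ m →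
      gN (K (eCov j k) (eCov l m)) (eMean i) = 0 := by
  intro i j k l m hjk hlm
  exact (isCodazzi_compr₂_fisher K hval hsymm1 hsymm2 hnabK).apply_eCov_eCov_eMean i hjk hlm
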